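/- arXiv:2003.04001 — 2 statements merged into one kernel-verified Lean document; each statement's English description precedes it below -/
import Mathlib

section
/- For every $d \geq 1$ and $k \in \{0,1,\ldots,d\}$, the limit as $n \to \infty$ of $\frac{2^{d-k}\binom{n}{d-k} C(n-d+k, k+1)}{C(n,d+1)}$ equals $2^{d-k}\binom{d}{k}$. -/
/-!
Numerator and denominator both grow like constants times `n ^ d`. In a partial sum
`∑_{m ≤ s} choose (n - a) m` the top term `~ n ^ s / s!` dominates, so
`schlaefliC (n - a) (s + 1) ~ 2 n ^ s / s!`; together with
`choose n (d - k) ~ n ^ (d - k) / (d - k)!` the ratio tends to `2 ^ (d - k) d! / ((d - k)! k!)`.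
-/

open Filter Asymptotics

/-- `C r s = 2 * ∑_{m=0}^{s-1} choose (r-1) m` -/
def schlaefliC (r s : ℕ) : ℕ := 2 * ∑ m ∈ Finset.range s, Nat.choose (r - 1) m

lemma isEquivalent_natCast_sub (a : ℕ) :
    (fun n : ℕ => ((n - a : ℕ) : ℝ)) ~[atTop] fun n => (n : ℝ) := by
  have hsub : (fun n : ℕ => (n : ℝ) - a) =ᶠ[atTop] fun n => ((n - a : ℕ) : ℝ) := by
    filter_upwards [eventually_ge_atTop a] with n hn
    rw [Nat.cast_sub hn]
  refine (IsEquivalent.refl.sub_isLittleO ?_).congr_left hsub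
  exact (isLittleO_const_id_atTop (a : ℝ)).comp_tendsto tendsto_natCast_atTop_atTop

lemma isEquivalent_choose_sub (a k : ℕ) :
    (fun n : ℕ => ((n - a).choose k : ℝ)) ~[atTop] fun n => (n : ℝ) ^ k / k.factorial :=
  ((isEquivalent_choose k).comp_tendsto (tendsto_sub_atTop_nat a)).trans
    (((isEquivalent_natCast_sub a).pow k).div IsEquivalent.refl)

lemma isLittleO_pow_div_factorial {m s : ℕ} (hms : m < s) :
    (fun n : ℕ => (n : ℝ) ^ m / m.factorial) =o[atTop]
      fun n => (n : ℝ) ^ s / s.factorial := by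
  simp_rw [div_eq_inv_mul]
  exact (((isLittleO_pow_pow_atTop_of_lt hms).comp_tendsto
    tendsto_natCast_atTop_atTop).const_mul_left _).const_mul_right (by positivity)

lemma isEquivalent_sum_range_choose_sub (a s : ℕ) :
    (fun n : ℕ => ∑ m ∈ Finset.range (s + 1), ((n - a).choose m : ℝ)) ~[atTop]
      fun n => (n : ℝ) ^ s / s.factorial := by
  simp_rw [Finset.sum_range_succ]
  refine (IsLittleO.fun_sum fun m hm => ?_).add_isEquivalent (isEquivalent_choose_sub a s)
  exact (isEquivalent_choose_sub a m).trans_isLittleO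
    (isLittleO_pow_div_factorial (Finset.mem_range.mp hm))

lemma isEquivalent_schlaefliC_sub (a s : ℕ) :
    (fun n : ℕ => (schlaefliC (n - a) (s + 1) : ℝ)) ~[atTop]
      fun n => 2 * ((n : ℝ) ^ s / s.factorial) := by
  have hC : (fun n : ℕ => (schlaefliC (n - a) (s + 1) : ℝ)) =
      fun n => 2 * ∑ m ∈ Finset.range (s + 1), ((n - (a + 1)).choose m : ℝ) := by
    funext n
    simp [schlaefliC, Nat.sub_sub]
  rw [hC]
  exact IsEquivalent.refl.mul (isEquivalent_sum_range_choose_sub (a + 1) s)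

theorem expected_face_numbers_limit_general (d k : ℕ) (hk : k ≤ d) :
    Tendsto (fun n : ℕ =>
        ((2 : ℝ) ^ (d - k) * (Nat.choose n (d - k) : ℝ) *
            (schlaefliC (n - d + k) (k + 1) : ℝ)) / (schlaefliC n (d + 1) : ℝ))
      atTop (nhds ((2 : ℝ) ^ (d - k) * (Nat.choose d k : ℝ))) := by
  have hfaces : (fun n : ℕ => (schlaefliC (n - (d - k)) (k + 1) : ℝ)) =ᶠ[atTop]
      fun n => (schlaefliC (n - d + k) (k + 1) : ℝ) := by
    filter_upwards [eventually_ge_atTop d] with n hn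
    rw [tsub_tsub_assoc hn hk]
  have hnum := ((IsEquivalent.refl (u := fun _ : ℕ => (2 : ℝ) ^ (d - k))).mul
    (isEquivalent_choose (d - k))).mul ((isEquivalent_schlaefliC_sub (d - k) k).congr_left hfaces)
  have hden := isEquivalent_schlaefliC_sub 0 d
  simp only [Nat.sub_zero] at hden
  refine (hnum.div hden).symm.tendsto_nhds (tendsto_const_nhds.congr' ?_)
  filter_upwards [eventually_gt_atTop 0] with n hn
  have hpow : (n : ℝ) ^ d = (n : ℝ) ^ (d - k) * (n : ℝ) ^ k := by
    rw [← pow_add, Nat.sub_add_cancel hk]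
  simp only [Pi.mul_apply, Pi.div_apply, hpow, Nat.cast_choose ℝ hk]
  field_simp

theorem expected_face_numbers_limit (d k : ℕ) (hd : 1 ≤ d) (hk : k ≤ d) :
    Tendsto (fun n : ℕ =>
        ((2 : ℝ) ^ (d - k) * (Nat.choose n (d - k) : ℝ) *
            (schlaefliC (n - d + k) (k + 1) : ℝ)) / (schlaefliC n (d + 1) : ℝ))
      atTop (nhds ((2 : ℝ) ^ (d - k) * (Nat.choose d k : ℝ))) :=
  expected_face_numbers_limit_general d k hk
end

section
/- Fix $d \geq 1$ and $m \geq d+1$, and fix $x_1, \ldots, x_m \in \mathbb{R}^d \setminus \{0\}$ in convex position. Let $f_n(y) = \frac{2}{\omega_{d+1}} \frac{n^d}{(1+n^2\|y\|^2)^{(d+1)/2}}$ and define $\varphi_n = \frac{n!}{(n-m)!} \left(\prod_{i=1}^m f_n(x_i)\right) \left(1 - \int_{\mathbb{R}^d \setminus K} f_n(y)\,dy\right)^{n-m}$, where $K = \mathrm{conv}(\{x_1,\ldots,x_m\})$. Assume $\int_{\mathbb{R}^d\setminus K}\|y\|^{-(d+1)}dy < \infty$. Then $\lim_{n\to\infty}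 \varphi_n = \left(\frac{2}{\omega_{d+1}}\right)^m \left(\prod_{i=1}^m \|x_i\|^{-(d+1)}\right) \exp\left(-\frac{2}{\omega_{d+1}} \int_{\mathbb{R}^d \setminus K} \frac{dy}{\|y\|^{d+1}}\right)$. -/
open MeasureTheory Filter

/-- Surface area of the unit sphere `S^{d-1}` in `ℝ^d`. -/
noncomputable def omega (d : ℕ) : ℝ := 2 * Real.pi ^ ((d : ℝ) / 2) / Real.Gamma ((d : ℝ) / 2)

/-!
Writing `f n = c * cauchyKernel d n` with `c = 2 / ω_{d+1}`, one has
`t * cauchyKernel d t y = (‖y‖² + t⁻²) ^ (-(d+1)/2)`,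
which increases to `‖y‖ ^ (-(d+1))` as `t → ∞`. Hence `n f n (xᵢ) → c ‖xᵢ‖ ^ (-(d+1))`, and by
dominated convergence (dominating function `c ‖y‖ ^ (-(d+1))`, integrable on `Kᶜ`)
`n ∫_{Kᶜ} f n → c ∫_{Kᶜ} ‖y‖ ^ (-(d+1))`, so `(1 - ∫_{Kᶜ} f n) ^ (n - m)` tends to the
exponential factor. Finally `n! / (n - m)! ∼ n ^ m` supplies the `m` factors of `n`.
-/

open Topology

lemma sq_rpow_succ_div_two (d : ℕ) {a : ℝ} (ha : 0 ≤ a) :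
    (a ^ 2) ^ (((d : ℝ) + 1) / 2) = a ^ (d + 1) := by
  rw [← Real.rpow_two, ← Real.rpow_mul ha, ← Real.rpow_natCast]
  push_cast
  ring_nf

lemma rpow_neg_succ (d : ℕ) {a : ℝ} (ha : 0 ≤ a) : a ^ (-((d : ℝ) + 1)) = (a ^ (d + 1))⁻¹ := by
  rw [Real.rpow_neg ha, ← Real.rpow_natCast]
  push_cast
  rfl

noncomputable def cauchyKernel {E : Type*} [Norm E] (d : ℕ) (t : ℝ) (y : E) : ℝ :=
  t ^ d / (1 + t ^ 2 * ‖y‖ ^ 2) ^ (((d : ℝ) + 1) / 2)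

section CauchyKernel

variable {E : Type*} [NormedAddCommGroup E] (d : ℕ)

lemma cauchyKernel_nonneg {t : ℝ} (ht : 0 ≤ t) (y : E) : 0 ≤ cauchyKernel d t y := by
  unfold cauchyKernel; positivity

lemma mul_cauchyKernel_eq {t : ℝ} (ht : 0 < t) (y : E) :
    t * cauchyKernel d t y = (‖y‖ ^ 2 + (t ^ 2)⁻¹) ^ (-(((d : ℝ) + 1) / 2)) := by
  have hsplit : 1 + t ^ 2 * ‖y‖ ^ 2 = t ^ 2 * (‖y‖ ^ 2 + (t ^ 2)⁻¹) := by
    field_simp; ring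
  rw [cauchyKernel, hsplit, Real.mul_rpow (by positivity) (by positivity),
    Real.rpow_neg (by positivity), sq_rpow_succ_div_two d ht.le, pow_succ]
  field_simp

lemma mul_cauchyKernel_le {t : ℝ} (ht : 0 ≤ t) {y : E} (hy : y ≠ 0) :
    t * cauchyKernel d t y ≤ ‖y‖ ^ (-((d : ℝ) + 1)) := by
  rcases ht.eq_or_lt with rfl | ht
  · rw [zero_mul]; positivity
  calc t * cauchyKernel d t y = (‖y‖ ^ 2 + (t ^ 2)⁻¹) ^ (-(((d : ℝ) + 1) / 2)) :=
        mul_cauchyKernel_eq d ht y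
    _ ≤ (‖y‖ ^ 2) ^ (-(((d : ℝ) + 1) / 2)) :=
        Real.rpow_le_rpow_of_nonpos (by positivity) (by simp; positivity) (by simp; positivity)
    _ = ‖y‖ ^ (-((d : ℝ) + 1)) := by
        rw [Real.rpow_neg (sq_nonneg _), sq_rpow_succ_div_two d (norm_nonneg y),
          rpow_neg_succ d (norm_nonneg y)]

lemma tendsto_mul_cauchyKernel {y : E} (hy : y ≠ 0) :
    Tendsto (fun n : ℕ => n * cauchyKernel d n y) atTop (𝓝 (‖y‖ ^ (-((d : ℝ) + 1)))) := by
  have hinv : Tendsto (fun n : ℕ => ((n : ℝ) ^ 2)⁻¹) atTop (𝓝 0) :=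
    tendsto_inv_atTop_zero.comp
      ((tendsto_pow_atTop two_ne_zero).comp tendsto_natCast_atTop_atTop)
  have hlim := ((tendsto_const_nhds (x := ‖y‖ ^ 2)).add hinv).rpow_const
    (p := -(((d : ℝ) + 1) / 2)) (Or.inl (by simpa using hy))
  rw [add_zero, Real.rpow_neg (sq_nonneg _), sq_rpow_succ_div_two d (norm_nonneg y),
    ← rpow_neg_succ d (norm_nonneg y)] at hlim
  refine hlim.congr' ?_
  filter_upwards [eventually_gt_atTop 0] with n hn
  exact (mul_cauchyKernel_eq d (Nat.cast_pos.mpr hn) y).symm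

lemma measurable_cauchyKernel [MeasurableSpace E] [OpensMeasurableSpace E] (t : ℝ) :
    Measurable (cauchyKernel (E := E) d t) := by
  unfold cauchyKernel; fun_prop

lemma tendsto_mul_integral_cauchyKernel [MeasurableSpace E] [OpensMeasurableSpace E]
    {μ : Measure E} (hμ : μ {0} = 0)
    (hint : Integrable (fun y => ‖y‖ ^ (-((d : ℝ) + 1))) μ) :
    Tendsto (fun n : ℕ => n * ∫ y, cauchyKernel d n y ∂μ) atTop
      (𝓝 (∫ y, ‖y‖ ^ (-((d : ℝ) + 1)) ∂μ)) := by
  have hne : ∀ᵐ y ∂μ, y ≠ 0 := measure_eq_zero_iff_ae_notMem.mp hμ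
  simp_rw [← integral_const_mul]
  refine tendsto_integral_of_dominated_convergence _
    (fun n => (measurable_const.mul (measurable_cauchyKernel d _)).aestronglyMeasurable) hint
    (fun n => ?_) (hne.mono fun y hy => tendsto_mul_cauchyKernel d hy)
  filter_upwards [hne] with y hy
  rw [Real.norm_of_nonneg (mul_nonneg n.cast_nonneg (cauchyKernel_nonneg d n.cast_nonneg y))]
  exact mul_cauchyKernel_le d n.cast_nonneg hy

end CauchyKernel

lemma tendsto_factorial_div_factorial_sub_div_pow (m : ℕ) :
    Tendsto (fun n : ℕ => ((n.factorial : ℝ) / ((n - m).factorial : ℝ)) / (n : ℝ) ^ m) atTop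
      (𝓝 1) := by
  have hz : ∀ᶠ n : ℕ in atTop, (n : ℝ) ^ m ≠ 0 := by
    filter_upwards [eventually_gt_atTop 0] with n hn
    positivity
  refine ((Asymptotics.isEquivalent_iff_tendsto_one hz).mp
    (isEquivalent_descFactorial m)).congr' ?_
  filter_upwards [eventually_ge_atTop m] with n hn
  rw [← Nat.factorial_mul_descFactorial hn, Nat.cast_mul,
    mul_div_cancel_left₀ _ (by positivity)]
  rfl

lemma tendsto_one_sub_pow_sub_exp {u : ℕ → ℝ} {t : ℝ}
    (hu : Tendsto (fun n : ℕ => n * u n) atTop (𝓝 t)) (m : ℕ) :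
    Tendsto (fun n => (1 - u n) ^ (n - m)) atTop (𝓝 (Real.exp (-t))) := by
  have hneg : Tendsto (fun n : ℕ => n * -u n) atTop (𝓝 (-t)) := by simpa using hu.neg
  have hu0 : Tendsto u atTop (𝓝 0) := by
    refine (hu.div_atTop tendsto_natCast_atTop_atTop).congr' ?_
    filter_upwards [eventually_gt_atTop 0] with n hn
    field_simp
  have hpow : Tendsto (fun n => (1 - u n) ^ m) atTop (𝓝 1) := by
    simpa using ((tendsto_const_nhds (x := (1 : ℝ))).sub hu0).pow m
  have := (Real.tendsto_one_add_pow_exp_of_tendsto hneg).div hpow one_ne_zero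
  rw [div_one] at this
  refine this.congr' ?_
  filter_upwards [eventually_ge_atTop m, hu0.eventually (gt_mem_nhds one_pos)] with n hn hun
  simp only [Pi.div_apply, ← sub_eq_add_neg]
  rw [pow_sub₀ _ (by linarith) hn, div_eq_mul_inv]

theorem density_convergence_general (d m : ℕ) (hd : 1 ≤ d)
    (x : Fin m → EuclideanSpace ℝ (Fin d)) (hx0 : ∀ i, x i ≠ 0)
    (K : Set (EuclideanSpace ℝ (Fin d)))
    (hint : IntegrableOn (fun y : EuclideanSpace ℝ (Fin d) => ‖y‖ ^ (-((d : ℝ) + 1))) Kᶜ volume)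
    (f : ℕ → EuclideanSpace ℝ (Fin d) → ℝ)
    (hf : ∀ n y, f n y = (2 / omega (d + 1)) *
      ((n : ℝ) ^ d / (1 + (n : ℝ) ^ 2 * ‖y‖ ^ 2) ^ (((d : ℝ) + 1) / 2))) :
    Tendsto (fun n : ℕ =>
        ((Nat.factorial n : ℝ) / (Nat.factorial (n - m) : ℝ)) *
          (∏ i, f n (x i)) * (1 - ∫ y in Kᶜ, f n y) ^ (n - m))
      atTop
      (nhds ((2 / omega (d + 1)) ^ m * (∏ i, ‖x i‖ ^ (-((d : ℝ) + 1))) *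
        Real.exp (-(2 / omega (d + 1)) * ∫ y in Kᶜ, ‖y‖ ^ (-((d : ℝ) + 1))))) := by
  set c := 2 / omega (d + 1)
  obtain rfl : f = fun (n : ℕ) y => c * cauchyKernel d n y := funext fun n => funext (hf n)
  -- makes `volume` on `EuclideanSpace ℝ (Fin d)` atomless
  have : Nonempty (Fin d) := ⟨⟨0, hd⟩⟩
  have hK0 : volume.restrict Kᶜ {(0 : EuclideanSpace ℝ (Fin d))} = 0 :=
    nonpos_iff_eq_zero.mp ((Measure.restrict_apply_le _ _).trans_eq (measure_singleton 0))
  have hI : Tendsto (fun n : ℕ => n * ∫ y in Kᶜ, c * cauchyKernel d n y) atTop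
      (𝓝 (c * ∫ y in Kᶜ, ‖y‖ ^ (-((d : ℝ) + 1)))) := by
    simpa only [integral_const_mul, mul_left_comm]
      using (tendsto_mul_integral_cauchyKernel d hK0 hint).const_mul c
  have hx : Tendsto (fun n : ℕ => ∏ i, n * (c * cauchyKernel d n (x i))) atTop
      (𝓝 (∏ i, c * ‖x i‖ ^ (-((d : ℝ) + 1)))) :=
    tendsto_finsetProd _ fun i _ => by
      simpa only [mul_left_comm] using (tendsto_mul_cauchyKernel d (hx0 i)).const_mul c
  have hlim := ((tendsto_factorial_div_factorial_sub_div_pow m).mul hx).mul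
    (tendsto_one_sub_pow_sub_exp hI m)
  rw [one_mul, Finset.prod_mul_distrib, Finset.prod_const, Finset.card_univ, Fintype.card_fin,
    ← neg_mul] at hlim
  refine hlim.congr' ?_
  filter_upwards [eventually_gt_atTop 0] with n hn
  rw [Finset.prod_mul_distrib, Finset.prod_const, Finset.card_univ, Fintype.card_fin]
  field_simp

theorem density_convergence (d m : ℕ) (hd : 1 ≤ d) (hm : d + 1 ≤ m)
    (x : Fin m → EuclideanSpace ℝ (Fin d)) (hx0 : ∀ i, x i ≠ 0)
    (hconvpos : ∀ i, x i ∉ convexHull ℝ (x '' {j | j ≠ i}))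
    (K : Set (EuclideanSpace ℝ (Fin d))) (hK : K = convexHull ℝ (Set.range x))
    (hint : IntegrableOn (fun y : EuclideanSpace ℝ (Fin d) => ‖y‖ ^ (-((d : ℝ) + 1))) Kᶜ volume)
    (f : ℕ → EuclideanSpace ℝ (Fin d) → ℝ)
    (hf : ∀ n y, f n y = (2 / omega (d + 1)) *
      ((n : ℝ) ^ d / (1 + (n : ℝ) ^ 2 * ‖y‖ ^ 2) ^ (((d : ℝ) + 1) / 2))) :
    Tendsto (fun n : ℕ =>
        ((Nat.factorial n : ℝ) / (Nat.factorial (n - m) : ℝ)) *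
          (∏ i, f n (x i)) * (1 - ∫ y in Kᶜ, f n y) ^ (n - m))
      atTop
      (nhds ((2 / omega (d + 1)) ^ m * (∏ i, ‖x i‖ ^ (-((d : ℝ) + 1))) *
        Real.exp (-(2 / omega (d + 1)) * ∫ y in Kᶜ, ‖y‖ ^ (-((d : ℝ) + 1))))) :=
  density_convergence_general d m hd x hx0 K hint f hf
end
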